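/- Let t and s be selfadjoint regular operators on a Hilbert C*-module E such that t+s (with domain D(t) ∩ D(s)) is a selfadjoint regular operator. Then C_{t+s} - C_t = (I - C_t) s (s + t + i)^{-1}. -/

import Mathlib

/-! Framework: unbounded (regular) operators on Hilbert C⋆-modules, bounded adjointable
operators, compact operators, Fredholm operators, Cayley and bounded transforms. -/

open scoped RightActions InnerProductSpace

noncomputable section

namespace RegularFredholm

/-- The Hilbert C⋆-module class of the Mathlib release this file was written for (December
2024): a *right* module over `A` (action of `Aᵐᵒᵖ`, written `x <• a`), with `A`-valued inner
product linear in the second variable. Current Mathlib's `CStarModule` is a left module;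
this class restores the original meaning. -/
class CStarModule (A : outParam <| Type*) (E : Type*) [NonUnitalSemiring A] [StarRing A]
    [Module ℂ A] [AddCommGroup E] [Module ℂ E] [PartialOrder A] [SMul Aᵐᵒᵖ E] [Norm A] [Norm E]
    extends Inner A E where
  inner_add_right {x} {y} {z} : inner x (y + z) = inner x y + inner x z
  inner_self_nonneg {x} : 0 ≤ inner x x
  inner_self {x} : inner x x = 0 ↔ x = 0
  inner_op_smul_right {a : A} {x y : E} : inner x (y <• a) = inner x y * a
  inner_smul_right_complex {z : ℂ} {x} {y} : inner x (z • y) = z • inner x y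
  star_inner x y : star (inner x y) = inner y x
  norm_eq_sqrt_norm_inner_self x : ‖x‖ = √‖inner x x‖

namespace CStarModule

section general

variable {A E : Type*} [NonUnitalRing A] [StarRing A] [AddCommGroup E] [Module ℂ A]
  [Module ℂ E] [PartialOrder A] [SMul Aᵐᵒᵖ E] [Norm A] [Norm E] [CStarModule A E]

theorem inner_add_left' {x y z : E} : ⟪x + y, z⟫_A = ⟪x, z⟫_A + ⟪y, z⟫_A := by
  rw [← star_inner z (x + y), inner_add_right, star_add, star_inner, star_inner]

theorem inner_op_smul_left' {a : A} {x y : E} : ⟪x <• a, y⟫_A = star a * ⟪x, y⟫_A := by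
  rw [← star_inner y, inner_op_smul_right, star_mul, star_inner]

variable [StarModule ℂ A]

theorem inner_smul_left_complex' {z : ℂ} {x y : E} : ⟪z • x, y⟫_A = star z • ⟪x, y⟫_A := by
  rw [← star_inner y, inner_smul_right_complex, star_smul, star_inner]

theorem inner_smul_left_real' {z : ℝ} {x y : E} : ⟪z • x, y⟫_A = z • ⟪x, y⟫_A := by
  have h₁ : z • x = (z : ℂ) • x := by simp
  rw [h₁, inner_smul_left_complex']
  simp

theorem inner_smul_right_real' {z : ℝ} {x y : E} : ⟪x, z • y⟫_A = z • ⟪x, y⟫_A := by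
  have h₁ : z • y = (z : ℂ) • y := by simp
  rw [h₁, inner_smul_right_complex]
  simp

theorem inner_zero_right' {x : E} : ⟪x, 0⟫_A = 0 := by
  have h := inner_add_right (A := A) (x := x) (y := (0 : E)) (z := 0)
  simpa using h

theorem inner_zero_left' {x : E} : ⟪0, x⟫_A = 0 := by
  rw [← star_inner x, inner_zero_right', star_zero]

theorem inner_neg_right' {x y : E} : ⟪x, -y⟫_A = -⟪x, y⟫_A := by
  have h := inner_add_right (A := A) (x := x) (y := y) (z := -y)
  rw [add_neg_cancel, inner_zero_right'] at h
  exact (neg_eq_of_add_eq_zero_right h.symm).symm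

theorem inner_neg_left' {x y : E} : ⟪-x, y⟫_A = -⟪x, y⟫_A := by
  rw [← star_inner y, inner_neg_right', star_neg, star_inner]

theorem inner_sub_right' {x y z : E} : ⟪x, y - z⟫_A = ⟪x, y⟫_A - ⟪x, z⟫_A := by
  rw [sub_eq_add_neg, inner_add_right, inner_neg_right', sub_eq_add_neg]

theorem inner_sub_left' {x y z : E} : ⟪x - y, z⟫_A = ⟪x, z⟫_A - ⟪y, z⟫_A := by
  rw [sub_eq_add_neg, inner_add_left', inner_neg_left', sub_eq_add_neg]

end general

section norm

variable {A E : Type*} [NonUnitalCStarAlgebra A] [PartialOrder A] [AddCommGroup E]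
  [Module ℂ E] [SMul Aᵐᵒᵖ E] [Norm E] [CStarModule A E]

theorem norm_sq_eq' (A : Type*) {E : Type*} [NonUnitalCStarAlgebra A] [PartialOrder A]
    [AddCommGroup E] [Module ℂ E] [SMul Aᵐᵒᵖ E] [Norm E] [CStarModule A E] {x : E} :
    ‖x‖ ^ 2 = ‖⟪x, x⟫_A‖ := by
  rw [norm_eq_sqrt_norm_inner_self (A := A) x, Real.sq_sqrt (norm_nonneg _)]

theorem norm_nonneg' (A : Type*) {E : Type*} [NonUnitalCStarAlgebra A] [PartialOrder A]
    [AddCommGroup E] [Module ℂ E] [SMul Aᵐᵒᵖ E] [Norm E] [CStarModule A E] {x : E} :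
    0 ≤ ‖x‖ := by
  rw [norm_eq_sqrt_norm_inner_self (A := A) x]; exact Real.sqrt_nonneg _

theorem norm_zero_iff' (A : Type*) {E : Type*} [NonUnitalCStarAlgebra A] [PartialOrder A]
    [AddCommGroup E] [Module ℂ E] [SMul Aᵐᵒᵖ E] [Norm E] [CStarModule A E] (x : E) :
    ‖x‖ = 0 ↔ x = 0 := by
  rw [norm_eq_sqrt_norm_inner_self (A := A) x, Real.sqrt_eq_zero (norm_nonneg _), norm_eq_zero,
    inner_self]

theorem norm_pos' (A : Type*) {E : Type*} [NonUnitalCStarAlgebra A] [PartialOrder A]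
    [AddCommGroup E] [Module ℂ E] [SMul Aᵐᵒᵖ E] [Norm E] [CStarModule A E] {x : E}
    (hx : x ≠ 0) : 0 < ‖x‖ :=
  lt_of_le_of_ne (norm_nonneg' A) (fun h => hx ((norm_zero_iff' A x).mp h.symm))

variable [StarOrderedRing A]

theorem inner_mul_inner_swap_le' {x y : E} :
    ⟪y, x⟫_A * ⟪x, y⟫_A ≤ ‖x‖ ^ 2 • ⟪y, y⟫_A := by
  rcases eq_or_ne x 0 with h | h
  · subst h
    rw [inner_zero_left', mul_zero, (norm_zero_iff' A (0 : E)).mpr rfl]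
    simp
  · have h₁ : ∀ (a : A),
        (0 : A) ≤ ‖x‖ ^ 2 • (star a * a) - ‖x‖ ^ 2 • (star a * ⟪x, y⟫_A)
                  - ‖x‖ ^ 2 • (⟪y, x⟫_A * a) + ‖x‖ ^ 2 • (‖x‖ ^ 2 • ⟪y, y⟫_A) := fun a => by
      calc (0 : A) ≤ ⟪x <• a - ‖x‖ ^ 2 • y, x <• a - ‖x‖ ^ 2 • y⟫_A := by
                      exact inner_self_nonneg
            _ = star a * ⟪x, x⟫_A * a - ‖x‖ ^ 2 • (star a * ⟪x, y⟫_A)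
                  - ‖x‖ ^ 2 • (⟪y, x⟫_A * a) + ‖x‖ ^ 2 • (‖x‖ ^ 2 • ⟪y, y⟫_A) := by
                      simp only [inner_sub_right', inner_op_smul_right, inner_sub_left',
                        inner_op_smul_left', inner_smul_left_real', inner_smul_right_real',
                        sub_mul, smul_sub, smul_mul_assoc, mul_assoc]
                      abel
            _ ≤ ‖x‖ ^ 2 • (star a * a) - ‖x‖ ^ 2 • (star a * ⟪x, y⟫_A)
                  - ‖x‖ ^ 2 • (⟪y, x⟫_A * a) + ‖x‖ ^ 2 • (‖x‖ ^ 2 • ⟪y, y⟫_A) := by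
                      gcongr
                      calc _ ≤ ‖⟪x, x⟫_A‖ • (star a * a) :=
                          CStarAlgebra.star_left_conjugate_le_norm_smul
                              (hb := star_inner x x)
                        _ = ‖x‖ ^ 2 • (star a * a) := by rw [norm_sq_eq' A]
    specialize h₁ ⟪x, y⟫_A
    rw [star_inner, sub_self, zero_sub, le_neg_add_iff_add_le, add_zero] at h₁
    rwa [smul_le_smul_iff_of_pos_left (pow_pos (norm_pos' A h) _)] at h₁

theorem norm_inner_le' {x y : E} : ‖⟪x, y⟫_A‖ ≤ ‖x‖ * ‖y‖ := by
  have := calc ‖⟪x, y⟫_A‖ ^ 2 = ‖⟪y, x⟫_A * ⟪x, y⟫_A‖ := by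
                rw [← star_inner x, CStarRing.norm_star_mul_self, pow_two]
    _ ≤ ‖‖x‖ ^ 2 • ⟪y, y⟫_A‖ := by
                refine CStarAlgebra.norm_le_norm_of_nonneg_of_le ?_ inner_mul_inner_swap_le'
                rw [← star_inner x]
                exact star_mul_self_nonneg ⟪x, y⟫_A
    _ = ‖x‖ ^ 2 * ‖⟪y, y⟫_A‖ := by simp [norm_smul]
    _ = ‖x‖ ^ 2 * ‖y‖ ^ 2 := by rw [norm_sq_eq' A (x := y)]
    _ = (‖x‖ * ‖y‖) ^ 2 := by rw [mul_pow]
  refine (pow_le_pow_iff_left₀ (norm_nonneg ⟪x, y⟫_A) ?_ (by simp)).mp this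
  exact mul_nonneg (norm_nonneg' A) (norm_nonneg' A)

theorem norm_triangle' (A : Type*) {E : Type*} [NonUnitalCStarAlgebra A] [PartialOrder A]
    [StarOrderedRing A] [AddCommGroup E] [Module ℂ E] [SMul Aᵐᵒᵖ E] [Norm E]
    [CStarModule A E] (x y : E) : ‖x + y‖ ≤ ‖x‖ + ‖y‖ := by
  have h : ‖x + y‖ ^ 2 ≤ (‖x‖ + ‖y‖) ^ 2 := by
    calc ‖x + y‖ ^ 2 = ‖⟪x, x⟫_A + ⟪y, x⟫_A + ⟪x, y⟫_A + ⟪y, y⟫_A‖ := by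
          rw [norm_sq_eq' A, inner_add_right, inner_add_left', inner_add_left', ← add_assoc]
      _ ≤ ‖⟪x, x⟫_A‖ + ‖⟪y, x⟫_A‖ + ‖⟪x, y⟫_A‖ + ‖⟪y, y⟫_A‖ := by
          refine (norm_add_le _ _).trans ?_
          gcongr
          exact norm_add₃_le
      _ ≤ ‖⟪x, x⟫_A‖ + ‖y‖ * ‖x‖ + ‖x‖ * ‖y‖ + ‖⟪y, y⟫_A‖ := by
          gcongr <;> exact norm_inner_le'
      _ = ‖x‖ ^ 2 + ‖y‖ * ‖x‖ + ‖x‖ * ‖y‖ + ‖y‖ ^ 2 := by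
          rw [norm_sq_eq' A (x := x), norm_sq_eq' A (x := y)]
      _ = (‖x‖ + ‖y‖) ^ 2 := by ring
  refine (pow_le_pow_iff_left₀ (norm_nonneg' A) ?_ (by simp)).mp h
  exact add_nonneg (norm_nonneg' A) (norm_nonneg' A)

/-- The normed space core of a Hilbert C⋆-module (as in the older Mathlib). -/
theorem normedSpaceCore' (A : Type*) {E : Type*} [NonUnitalCStarAlgebra A] [PartialOrder A]
    [StarOrderedRing A] [AddCommGroup E] [Module ℂ E] [SMul Aᵐᵒᵖ E] [Norm E]
    [CStarModule A E] : NormedSpace.Core ℂ E where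
  norm_nonneg _ := norm_nonneg' A
  norm_eq_zero_iff x := norm_zero_iff' A x
  norm_triangle x y := norm_triangle' A x y
  norm_smul c x := by
    rw [norm_eq_sqrt_norm_inner_self (A := A) (c • x), norm_eq_sqrt_norm_inner_self (A := A) x,
      inner_smul_right_complex, inner_smul_left_complex', smul_smul, norm_smul,
      Real.sqrt_mul (norm_nonneg _)]
    congr 1
    rw [norm_mul, norm_star, Real.sqrt_mul_self (norm_nonneg _)]

end norm

end CStarModule

/-! Products of Hilbert C⋆-modules (as in the older Mathlib). -/

section Prod

variable {A : Type*} [NonUnitalCStarAlgebra A] [PartialOrder A]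
variable {E F : Type*}
variable [NormedAddCommGroup E] [Module ℂ E] [SMul Aᵐᵒᵖ E]
variable [NormedAddCommGroup F] [Module ℂ F] [SMul Aᵐᵒᵖ F]
variable [CStarModule A E] [CStarModule A F]

noncomputable instance instNormWithCStarModuleProd : Norm (WithCStarModule A (E × F)) where
  norm x := √‖⟪x.1, x.1⟫_A + ⟪x.2, x.2⟫_A‖

variable [StarOrderedRing A]

noncomputable instance instCStarModuleWithCStarModuleProd :
    CStarModule A (WithCStarModule A (E × F)) where
  inner x y := ⟪x.1, y.1⟫_A + ⟪x.2, y.2⟫_A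
  inner_add_right {x y z} := by
    change ⟪x.1, y.1 + z.1⟫_A + ⟪x.2, y.2 + z.2⟫_A = _
    rw [CStarModule.inner_add_right, CStarModule.inner_add_right]
    exact add_add_add_comm ..
  inner_self_nonneg :=
    add_nonneg CStarModule.inner_self_nonneg CStarModule.inner_self_nonneg
  inner_self {x} := by
    refine ⟨fun h ↦ ?_, fun h ↦ ?_⟩
    · apply WithCStarModule.equiv A (E × F) |>.injective
      ext
      · refine CStarModule.inner_self.mp <| le_antisymm ?_ (CStarModule.inner_self_nonneg (A := A))
        exact le_add_of_nonneg_right CStarModule.inner_self_nonneg |>.trans_eq h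
      · refine CStarModule.inner_self.mp <| le_antisymm ?_ (CStarModule.inner_self_nonneg (A := A))
        exact le_add_of_nonneg_left CStarModule.inner_self_nonneg |>.trans_eq h
    · subst h
      change ⟪(0 : E), 0⟫_A + ⟪(0 : F), 0⟫_A = 0
      rw [CStarModule.inner_zero_left', CStarModule.inner_zero_left', add_zero]
  inner_op_smul_right {a x y} := by
    change ⟪x.1, y.1 <• a⟫_A + ⟪x.2, y.2 <• a⟫_A = (⟪x.1, y.1⟫_A + ⟪x.2, y.2⟫_A) * a
    rw [CStarModule.inner_op_smul_right, CStarModule.inner_op_smul_right, add_mul]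
  inner_smul_right_complex {z x y} := by
    change ⟪x.1, z • y.1⟫_A + ⟪x.2, z • y.2⟫_A = z • (⟪x.1, y.1⟫_A + ⟪x.2, y.2⟫_A)
    rw [CStarModule.inner_smul_right_complex, CStarModule.inner_smul_right_complex, smul_add]
  star_inner x y := by
    change star (⟪x.1, y.1⟫_A + ⟪x.2, y.2⟫_A) = ⟪y.1, x.1⟫_A + ⟪y.2, x.2⟫_A
    rw [star_add, CStarModule.star_inner, CStarModule.star_inner]
  norm_eq_sqrt_norm_inner_self _ := rfl

theorem prod_norm_le_norm_add' (x : WithCStarModule A (E × F)) : ‖x‖ ≤ ‖x.1‖ + ‖x.2‖ := by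
  refine abs_le_of_sq_le_sq' ?_ (by positivity) |>.2
  calc ‖x‖ ^ 2 ≤ ‖⟪x.1, x.1⟫_A‖ + ‖⟪x.2, x.2⟫_A‖ := by
        rw [CStarModule.norm_sq_eq' A]; exact norm_add_le _ _
    _ = ‖x.1‖ ^ 2 + 0 + ‖x.2‖ ^ 2 := by
        rw [CStarModule.norm_sq_eq' A (x := x.1), CStarModule.norm_sq_eq' A (x := x.2), add_zero]
    _ ≤ ‖x.1‖ ^ 2 + 2 * ‖x.1‖ * ‖x.2‖ + ‖x.2‖ ^ 2 := by gcongr; positivity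
    _ = (‖x.1‖ + ‖x.2‖) ^ 2 := by ring

theorem max_le_prod_norm' (x : WithCStarModule A (E × F)) : max ‖x.1‖ ‖x.2‖ ≤ ‖x‖ := by
  rw [CStarModule.norm_eq_sqrt_norm_inner_self (A := A) x,
    CStarModule.norm_eq_sqrt_norm_inner_self (A := A) x.1,
    CStarModule.norm_eq_sqrt_norm_inner_self (A := A) x.2]
  change max _ _ ≤ √‖⟪x.1, x.1⟫_A + ⟪x.2, x.2⟫_A‖
  simp only [max_le_iff, Real.sqrt_le_sqrt_iff (norm_nonneg _)]
  constructor
  · refine CStarAlgebra.norm_le_norm_of_nonneg_of_le CStarModule.inner_self_nonneg ?_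
    exact le_add_of_nonneg_right CStarModule.inner_self_nonneg
  · refine CStarAlgebra.norm_le_norm_of_nonneg_of_le CStarModule.inner_self_nonneg ?_
    exact le_add_of_nonneg_left CStarModule.inner_self_nonneg

section Aux

attribute [-instance] WithCStarModule.instUniformSpace WithCStarModule.instBornology

/-- Auxiliary normed group structure with the wrong topology. -/
noncomputable abbrev normedAddCommGroupProdAux' : NormedAddCommGroup (WithCStarModule A (E × F)) :=
  NormedAddCommGroup.ofCore (CStarModule.normedSpaceCore' A)

attribute [local instance] normedAddCommGroupProdAux'

theorem antilipschitzWith_two_equiv_prod_aux' :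
    AntilipschitzWith 2 (WithCStarModule.equiv A (E × F)) :=
  AddMonoidHomClass.antilipschitz_of_bound (WithCStarModule.linearEquiv ℂ A (E × F)) fun x ↦ by
    apply prod_norm_le_norm_add' x |>.trans
    simp only [NNReal.coe_ofNat, WithCStarModule.linearEquiv_apply, two_mul]
    gcongr
    · exact norm_fst_le _
    · exact norm_snd_le _

theorem lipschitzWith_one_equiv_prod_aux' :
    LipschitzWith 1 (WithCStarModule.equiv A (E × F)) :=
  AddMonoidHomClass.lipschitz_of_bound_nnnorm (WithCStarModule.linearEquiv ℂ A (E × F)) 1 <| by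
    intro x
    rw [one_mul, ← NNReal.coe_le_coe, coe_nnnorm, coe_nnnorm]
    exact max_le_prod_norm' x

theorem uniformity_prod_eq_aux' :
    @uniformity _ ((inferInstance : UniformSpace (E × F)).comap <| WithCStarModule.equiv A (E × F)) =
      uniformity (WithCStarModule A (E × F)) :=
  uniformity_eq_of_bilipschitz antilipschitzWith_two_equiv_prod_aux'
    lipschitzWith_one_equiv_prod_aux'

theorem isBounded_prod_iff_aux' (s : Set (WithCStarModule A (E × F))) :
    @Bornology.IsBounded _ (Bornology.induced <| WithCStarModule.equiv A (E × F)) s ↔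
      Bornology.IsBounded s :=
  isBounded_iff_of_bilipschitz antilipschitzWith_two_equiv_prod_aux'
    lipschitzWith_one_equiv_prod_aux' s

end Aux

noncomputable instance instNormedAddCommGroupWithCStarModuleProd :
    NormedAddCommGroup (WithCStarModule A (E × F)) :=
  .ofCoreReplaceAll (CStarModule.normedSpaceCore' A) uniformity_prod_eq_aux'
    isBounded_prod_iff_aux'

noncomputable instance instNormedSpaceWithCStarModuleProd :
    NormedSpace ℂ (WithCStarModule A (E × F)) :=
  .ofCore (CStarModule.normedSpaceCore' A)

end Prod

/-- An unbounded operator on `E`: a (not necessarily closed) domain together with a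
linear map into `E`. -/
structure UnboundedOp (A : Type*) [NonUnitalCStarAlgebra A] [PartialOrder A]
    [StarOrderedRing A] (E : Type*) [NormedAddCommGroup E] [NormedSpace ℂ E]
    [SMul Aᵐᵒᵖ E] [CStarModule A E] where
  dom : Submodule ℂ E
  toFun : dom →ₗ[ℂ] E

section Defs

variable {A : Type*} [NonUnitalCStarAlgebra A] [PartialOrder A] [StarOrderedRing A]
variable {E : Type*} [NormedAddCommGroup E] [NormedSpace ℂ E] [SMul Aᵐᵒᵖ E] [CStarModule A E]

namespace UnboundedOp

variable (t s : UnboundedOp A E)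

/-- Application of an unbounded operator at a point of its domain. -/
def app (x : E) (hx : x ∈ t.dom) : E := t.toFun ⟨x, hx⟩

/-- `t` is densely defined. -/
def DenselyDefined : Prop := Dense (t.dom : Set E)

/-- The graph of `t` as a subset of `E × E`. -/
def graph : Set (E × E) := {p | ∃ hx : p.1 ∈ t.dom, t.app p.1 hx = p.2}

/-- `t` is a closed operator. -/
def IsClosedOp : Prop := IsClosed t.graph

/-- `t'` is the adjoint of `t`: it is a formal adjoint which is maximal among formal
adjoints. -/
def IsAdjoint (t' : UnboundedOp A E) : Prop :=
  (∀ x (hx : x ∈ t.dom) y (hy : y ∈ t'.dom),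
      (⟪t.app x hx, y⟫_A : A) = ⟪x, t'.app y hy⟫_A) ∧
  ∀ y z : E, (∀ x (hx : x ∈ t.dom), (⟪t.app x hx, y⟫_A : A) = ⟪x, z⟫_A) →
    ∃ hy : y ∈ t'.dom, t'.app y hy = z

/-- `t` is a regular operator with adjoint `t'`: it is closed, densely defined, has
densely defined adjoint `t'`, and `1 + t'∘t` (i.e. `1 + t⋆t`) has dense range. -/
def IsRegularPair (t' : UnboundedOp A E) : Prop :=
  t.DenselyDefined ∧ t.IsClosedOp ∧ t.IsAdjoint t' ∧ t'.DenselyDefined ∧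
    Dense {y : E | ∃ (x : E) (hx : x ∈ t.dom) (hx' : t.app x hx ∈ t'.dom),
      y = x + t'.app (t.app x hx) hx'}

/-- `t` is a selfadjoint regular operator. -/
def IsSelfAdjointRegular : Prop := t.IsRegularPair t

/-- The sum of an unbounded operator and a bounded operator, with the same domain. -/
def addBounded (D : E →L[ℂ] E) : UnboundedOp A E where
  dom := t.dom
  toFun := t.toFun + (D : E →ₗ[ℂ] E) ∘ₗ t.dom.subtype

/-- The sum of two unbounded operators, with domain the intersection of the domains. -/
def add : UnboundedOp A E where
  dom := t.dom ⊓ s.dom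
  toFun := t.toFun ∘ₗ Submodule.inclusion inf_le_left +
    s.toFun ∘ₗ Submodule.inclusion inf_le_right

/-- A bounded operator regarded as an unbounded operator with full domain. -/
def ofCLM (T : E →L[ℂ] E) : UnboundedOp A E where
  dom := ⊤
  toFun := (T : E →ₗ[ℂ] E) ∘ₗ (⊤ : Submodule ℂ E).subtype

/-- `R` is the (two-sided) inverse of `t + c` for a scalar `c`, i.e. `R = (t + c)⁻¹`. -/
def IsResolvent (c : ℂ) (R : E →L[ℂ] E) : Prop :=
  (∀ x : E, ∃ h : R x ∈ t.dom, t.app (R x) h + c • R x = x) ∧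
  ∀ x (hx : x ∈ t.dom), R (t.app x hx + c • x) = x

/-- `R` is the (two-sided) inverse of `1 + t'∘t`, i.e. `R = (1 + t⋆t)⁻¹`
(for `t` with adjoint `t'`). -/
def IsResolventSq (t' : UnboundedOp A E) (R : E →L[ℂ] E) : Prop :=
  (∀ x : E, ∃ (h : R x ∈ t.dom) (h' : t.app (R x) h ∈ t'.dom),
      t'.app (t.app (R x) h) h' + R x = x) ∧
  ∀ x (hx : x ∈ t.dom) (hx' : t.app x hx ∈ t'.dom),
    R (x + t'.app (t.app x hx) hx') = x

/-- `C` is the Cayley transform of `t`, namely `C = (t - i)(t + i)⁻¹`. -/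
def IsCayley (C : E →L[ℂ] E) : Prop :=
  ∃ R : E →L[ℂ] E, t.IsResolvent Complex.I R ∧
    ∀ x : E, ∃ h : R x ∈ t.dom, C x = t.app (R x) h - Complex.I • R x

/-- `Q` is the operator `(1 + t⋆t)^(-1/2)` (with `t'` the adjoint of `t`): `Q` is a
positive selfadjoint bounded operator whose square is the inverse of `1 + t'∘t`. -/
def IsSqrtResolvent (t' : UnboundedOp A E) (Q : E →L[ℂ] E) : Prop :=
  (∀ x y : E, (⟪Q x, y⟫_A : A) = ⟪x, Q y⟫_A) ∧ (∀ x : E, (0 : A) ≤ ⟪x, Q x⟫_A) ∧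
    t.IsResolventSq t' (Q.comp Q)

/-- `F` is the bounded transform `t ∘ Q` of `t`, where `Q = (1 + t⋆t)^(-1/2)`. -/
def IsBoundedTransform (Q F : E →L[ℂ] E) : Prop :=
  ∀ x : E, ∃ h : Q x ∈ t.dom, F x = t.app (Q x) h

end UnboundedOp

end Defs

section BoundedDefs

variable (A : Type*) [NonUnitalCStarAlgebra A] [PartialOrder A] [StarOrderedRing A]
variable {E : Type*} [NormedAddCommGroup E] [NormedSpace ℂ E] [SMul Aᵐᵒᵖ E] [CStarModule A E]

/-- `S` is an adjoint for the bounded operator `T`. -/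
def IsAdjointableB (T S : E →L[ℂ] E) : Prop :=
  ∀ x y : E, (⟪T x, y⟫_A : A) = ⟪x, S y⟫_A

/-- `T` is a bounded adjointable operator. -/
def Adjointable (T : E →L[ℂ] E) : Prop := ∃ S : E →L[ℂ] E, IsAdjointableB A T S

/-- `T` is a "rank one" operator `θ_{x,y} : z ↦ x • ⟪y, z⟫`. -/
def IsRankOne (T : E →L[ℂ] E) : Prop :=
  ∃ x y : E, ∀ z : E, T z = x <• (⟪y, z⟫_A : A)

/-- `T` is a compact operator: it belongs to the closed linear span of the rank one
operators. -/
def IsCompactOp (T : E →L[ℂ] E) : Prop :=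
  T ∈ closure (Submodule.span ℂ {S : E →L[ℂ] E | IsRankOne A S} : Set (E →L[ℂ] E))

/-- `T` is a Fredholm bounded adjointable operator: `T` is adjointable and invertible
modulo the compact operators. -/
def IsFredholmB (T : E →L[ℂ] E) : Prop :=
  Adjointable A T ∧ ∃ G : E →L[ℂ] E, Adjointable A G ∧
    IsCompactOp A (G * T - 1) ∧ IsCompactOp A (T * G - 1)

/-- `U` is a unitary element of the bounded adjointable operators. -/
def IsUnitaryB (U : E →L[ℂ] E) : Prop :=
  ∃ U' : E →L[ℂ] E, IsAdjointableB A U U' ∧ U' * U = 1 ∧ U * U' = 1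

end BoundedDefs

section MoreDefs

variable {A : Type*} [NonUnitalCStarAlgebra A] [PartialOrder A] [StarOrderedRing A]
variable {E : Type*} [NormedAddCommGroup E] [NormedSpace ℂ E] [SMul Aᵐᵒᵖ E] [CStarModule A E]

/-- A regular operator `t` (with adjoint `t'`) is Fredholm if its bounded transform
`F_t = t (1 + t⋆t)^(-1/2)` is a Fredholm bounded adjointable operator. -/
def UnboundedOp.IsFredholm (t t' : UnboundedOp A E) : Prop :=
  ∃ Q F : E →L[ℂ] E, t.IsSqrtResolvent t' Q ∧ t.IsBoundedTransform Q F ∧ IsFredholmB A F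

/-- `s` is relatively `t`-compact: the map `s : E(t) → E`, where `E(t)` is the domain of
`t` equipped with the graph inner product `⟪x,y⟫ + ⟪t x, t y⟫`, lies in the closed linear
span of the rank one operators `E(t) → E`; i.e. it can be approximated, in the operator
norm for maps `E(t) → E`, by finite sums of operators
`θ_{x,y} : z ↦ x • (⟪y, z⟫ + ⟪t y, t z⟫)` with `x ∈ E`, `y ∈ E(t)`. -/
def IsRelativelyCompact (t s : UnboundedOp A E) (hsub : t.dom ≤ s.dom) : Prop :=
  ∀ ε > (0 : ℝ), ∃ (n : ℕ) (x : Fin n → E) (y : Fin n → E) (hy : ∀ i, y i ∈ t.dom),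
    ∀ z (hz : z ∈ t.dom),
      ‖s.app z (hsub hz) - ∑ i, x i <•
          ((⟪y i, z⟫_A : A) + ⟪t.app (y i) (hy i), t.app z hz⟫_A)‖ ≤
        ε * Real.sqrt ‖(⟪z, z⟫_A : A) + ⟪t.app z hz, t.app z hz⟫_A‖

/-- The graph of `t` inside the Hilbert C⋆-module `E ⊕ E`. -/
def graphSet (t : UnboundedOp A E) : Set (WithCStarModule A (E × E)) :=
  {p | ∃ hx : (WithCStarModule.equiv A (E × E) p).1 ∈ t.dom,
    t.app (WithCStarModule.equiv A (E × E) p).1 hx = (WithCStarModule.equiv A (E × E) p).2}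

/-- `P` is the orthogonal projection of `E ⊕ E` onto the graph of `t`: a selfadjoint
idempotent whose range is the graph of `t`.  The gap metric between regular operators
`t`, `s` is `‖P_{G(t)} - P_{G(s)}‖` for the associated graph projections. -/
def IsGraphProjection (t : UnboundedOp A E)
    (P : WithCStarModule A (E × E) →L[ℂ] WithCStarModule A (E × E)) : Prop :=
  IsAdjointableB A P P ∧ P * P = P ∧ Set.range P = graphSet t

end MoreDefs

variable {A : Type*} [NonUnitalCStarAlgebra A] [PartialOrder A] [StarOrderedRing A]
variable {E : Type*} [NormedAddCommGroup E] [NormedSpace ℂ E] [SMul Aᵐᵒᵖ E] [CStarModule A E]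

/-! Both Cayley transforms are of the form `1 - 2i (· + i)⁻¹`, so `C_{t+s} - C_t` is `2i` times
the difference of the resolvents `(t + i)⁻¹ - (t + s + i)⁻¹`, which the second resolvent identity
rewrites as `(t + i)⁻¹ s (t + s + i)⁻¹`; and `2i (t + i)⁻¹ = 1 - C_t`. -/

namespace UnboundedOp

theorem add_app (t s : UnboundedOp A E) {x : E} (hx : x ∈ (t.add s).dom) :
    (t.add s).app x hx = t.app x hx.1 + s.app x hx.2 :=
  rfl

variable {t s : UnboundedOp A E}

theorem IsResolvent.unique {c : ℂ} {R R' : E →L[ℂ] E} (hR : t.IsResolvent c R)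
    (hR' : t.IsResolvent c R') : R = R' := by
  ext x
  obtain ⟨hx, hRx⟩ := hR.1 x
  calc R x = R' (t.app (R x) hx + c • R x) := (hR'.2 _ hx).symm
    _ = R' x := by rw [hRx]

theorem IsCayley.eq_one_sub_resolvent {C R : E →L[ℂ] E} (hC : t.IsCayley C)
    (hR : t.IsResolvent Complex.I R) : C = 1 - (2 * Complex.I) • R := by
  obtain ⟨R₀, hR₀, hCR₀⟩ := hC
  rw [hR₀.unique hR] at hCR₀
  ext x
  obtain ⟨hx, hCx⟩ := hCR₀ x
  obtain ⟨_, hRx⟩ := hR.1 x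
  calc C x = (t.app (R x) hx + Complex.I • R x) - (2 * Complex.I) • R x := by
        rw [hCx, mul_smul, two_smul]; abel
    _ = _ := by rw [hRx]; rfl

/-- The second resolvent identity `(t + c)⁻¹ - (t + s + c)⁻¹ = (t + c)⁻¹ s (t + s + c)⁻¹`. -/
theorem IsResolvent.sub_isResolvent_add {c : ℂ} {R R' B : E →L[ℂ] E}
    (hR : t.IsResolvent c R) (hR' : (t.add s).IsResolvent c R')
    (hB : ∀ x : E, ∃ h : R' x ∈ s.dom, B x = s.app (R' x) h) :
    R - R' = R * B := by
  ext x
  obtain ⟨hy, hR'x⟩ := hR'.1 x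
  obtain ⟨_, hBx⟩ := hB x
  have hx : x = (t.app (R' x) hy.1 + c • R' x) + B x :=
    calc x = (t.add s).app (R' x) hy + c • R' x := hR'x.symm
      _ = _ := by rw [add_app, hBx]; abel
  calc R x - R' x = R (t.app (R' x) hy.1 + c • R' x) + R (B x) - R' x := by
        rw [← map_add, ← hx]
    _ = R (B x) := by rw [hR.2 _ hy.1]; abel

end UnboundedOp

theorem cayley_add_sub_cayley_general
    (t s : UnboundedOp A E)
    (C C' R' B : E →L[ℂ] E) (hC : t.IsCayley C) (hC' : (t.add s).IsCayley C')
    (hR' : (t.add s).IsResolvent Complex.I R')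
    (hB : ∀ x : E, ∃ h : R' x ∈ s.dom, B x = s.app (R' x) h) :
    C' - C = (1 - C) * B := by
  have ⟨R, hR, _⟩ := hC
  have hC_eq := hC.eq_one_sub_resolvent hR
  have hC'_eq := hC'.eq_one_sub_resolvent hR'
  have hres := hR.sub_isResolvent_add hR' hB
  calc C' - C = (2 * Complex.I) • (R - R') := by rw [hC_eq, hC'_eq, smul_sub]; abel
    _ = (1 - C) * B := by rw [hres, hC_eq, sub_sub_cancel, smul_mul_assoc]

/-- For selfadjoint regular operators `t`, `s` such that `t + s` (with
domain `D(t) ∩ D(s)`) is selfadjoint regular, one has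
`C_{t+s} - C_t = (I - C_t) ∘ s ∘ (s + t + i)⁻¹`. -/
theorem cayley_add_sub_cayley
    (t s : UnboundedOp A E) (ht : t.IsSelfAdjointRegular) (hs : s.IsSelfAdjointRegular)
    (hts : (t.add s).IsSelfAdjointRegular)
    (C C' R' B : E →L[ℂ] E) (hC : t.IsCayley C) (hC' : (t.add s).IsCayley C')
    (hR' : (t.add s).IsResolvent Complex.I R')
    (hB : ∀ x : E, ∃ h : R' x ∈ s.dom, B x = s.app (R' x) h) :
    C' - C = (1 - C) * B :=
  cayley_add_sub_cayley_general t s C C' R' B hC hC' hR' hB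

end RegularFredholm
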